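/- Let a, b, c₁, c₂ be real numbers and x, y > 0 be real. The 4×4 real symmetric matrix γ(a,b,c₁,c₂) − D(x,y) is positive semidefinite if and only if all of the following hold: a − x/2 ≥ 0, b − y/2 ≥ 0, (a − x/2)(b − y/2) − c₁² ≥ 0, a − 1/(2x) ≥ 0, b − 1/(2y) ≥ 0, and (a − 1/(2x))(b − 1/(2y)) − c₂² ≥ 0. -/

import Mathlib

open Matrix

/-- The standard-form two-mode covariance matrix `γ(a,b,c₁,c₂)`. -/
def stdCM (a b c₁ c₂ : ℝ) : Matrix (Fin 4) (Fin 4) ℝ :=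
  !![a, 0, c₁, 0;
     0, a, 0, -c₂;
     c₁, 0, b, 0;
     0, -c₂, 0, b]

/-- The covariance matrix `(1/2)·diag(x, 1/x, y, 1/y)` of a product of two
squeezed vacuum states. -/
noncomputable def sqCM (x y : ℝ) : Matrix (Fin 4) (Fin 4) ℝ :=
  !![x / 2, 0, 0, 0;
     0, 1 / (2 * x), 0, 0;
     0, 0, y / 2, 0;
     0, 0, 0, 1 / (2 * y)]

/-- A binary quadratic form with psd coefficient conditions is nonnegative. -/
lemma quad_nonneg (p q r u v : ℝ) (hp : 0 ≤ p) (hr : 0 ≤ r)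
    (hd : 0 ≤ p * r - q ^ 2) : 0 ≤ p * u ^ 2 + 2 * q * u * v + r * v ^ 2 := by
  rcases hp.eq_or_lt with h | h
  · have hq : q = 0 := by nlinarith
    subst hq
    nlinarith [sq_nonneg v]
  · nlinarith [sq_nonneg (p * u + q * v), mul_nonneg hd (sq_nonneg v)]

/-- Conversely, a nonnegative binary quadratic form has psd coefficients. -/
lemma quad_det (p q r : ℝ)
    (h : ∀ u v : ℝ, 0 ≤ p * u ^ 2 + 2 * q * u * v + r * v ^ 2) :
    0 ≤ p ∧ 0 ≤ r ∧ 0 ≤ p * r - q ^ 2 := by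
  have hp : 0 ≤ p := by have := h 1 0; nlinarith
  have hr : 0 ≤ r := by have := h 0 1; nlinarith
  refine ⟨hp, hr, ?_⟩
  rcases hr.eq_or_lt with h0 | h0
  · rcases hp.eq_or_lt with h1 | h1
    · have := h (-q) 1
      nlinarith
    · have := h (-q) p
      nlinarith
  · have := h r (-q)
    nlinarith

set_option maxHeartbeats 1000000 in
theorem stdCM_sub_sqCM_posSemidef_iff
    (a b c₁ c₂ x y : ℝ) (hx : 0 < x) (hy : 0 < y) :
    (stdCM a b c₁ c₂ - sqCM x y).PosSemidef ↔
      (a - x / 2 ≥ 0 ∧ b - y / 2 ≥ 0 ∧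
       (a - x / 2) * (b - y / 2) - c₁ ^ 2 ≥ 0 ∧
       a - 1 / (2 * x) ≥ 0 ∧ b - 1 / (2 * y) ≥ 0 ∧
       (a - 1 / (2 * x)) * (b - 1 / (2 * y)) - c₂ ^ 2 ≥ 0) := by
  constructor
  · intro h
    have key : ∀ v : Fin 4 → ℝ, 0 ≤
        v 0 * ((a - x / 2) * v 0 + c₁ * v 2) + v 1 * ((a - x⁻¹ * 2⁻¹) * v 1 + -(c₂ * v 3)) +
          v 2 * (c₁ * v 0 + (b - y / 2) * v 2) +
          v 3 * (-(c₂ * v 1) + (b - y⁻¹ * 2⁻¹) * v 3) := by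
      intro v
      have h2 := h.dotProduct_mulVec_nonneg v
      simpa [stdCM, sqCM, Matrix.sub_apply, Matrix.mulVec, dotProduct,
        Fin.sum_univ_four, Matrix.vecHead, Matrix.vecTail] using h2
    have k1 : ∀ u w : ℝ,
        0 ≤ (a - x / 2) * u ^ 2 + 2 * c₁ * u * w + (b - y / 2) * w ^ 2 := by
      intro u w
      have := key ![u, 0, w, 0]
      simp only [Matrix.cons_val_zero, Matrix.cons_val_one, Matrix.head_cons,
        Matrix.cons_val_two, Matrix.tail_cons, Matrix.cons_val_three] at this
      nlinarith [this]
    have k2 : ∀ u w : ℝ,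
        0 ≤ (a - 1 / (2 * x)) * u ^ 2 + 2 * (-c₂) * u * w + (b - 1 / (2 * y)) * w ^ 2 := by
      intro u w
      have := key ![0, u, 0, w]
      simp only [Matrix.cons_val_zero, Matrix.cons_val_one, Matrix.head_cons,
        Matrix.cons_val_two, Matrix.tail_cons, Matrix.cons_val_three] at this
      have hx2 : (1 : ℝ) / (2 * x) = x⁻¹ * 2⁻¹ := by ring
      have hy2 : (1 : ℝ) / (2 * y) = y⁻¹ * 2⁻¹ := by ring
      rw [hx2, hy2]
      nlinarith [this]
    obtain ⟨hp1, hr1, hd1⟩ := quad_det _ _ _ k1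
    obtain ⟨hp2, hr2, hd2⟩ := quad_det _ _ _ k2
    refine ⟨hp1, hr1, by nlinarith [hd1], hp2, hr2, by nlinarith [hd2]⟩
  · rintro ⟨h1, h2, h3, h4, h5, h6⟩
    rw [Matrix.posSemidef_iff_dotProduct_mulVec]
    constructor
    · ext i j
      fin_cases i <;> fin_cases j <;>
        simp [stdCM, sqCM, Matrix.conjTranspose_apply, Matrix.vecHead, Matrix.vecTail]
    · intro v
      have q1 := quad_nonneg (a - x / 2) c₁ (b - y / 2) (v 0) (v 2) h1 h2 h3
      have q2 := quad_nonneg (a - 1 / (2 * x)) (-c₂) (b - 1 / (2 * y)) (v 1) (v 3)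
        h4 h5 (by nlinarith [h6])
      have e1 : a - 1 / (2 * x) = a - x⁻¹ * 2⁻¹ := by ring
      have e2 : b - 1 / (2 * y) = b - y⁻¹ * 2⁻¹ := by ring
      rw [e1, e2] at q2
      simp [stdCM, sqCM, Matrix.sub_apply, Matrix.mulVec, dotProduct,
        Fin.sum_univ_four, Matrix.vecHead, Matrix.vecTail]
      linarith [q1, q2]
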